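/- arXiv:1812.06682 — 6 statements merged into one kernel-verified Lean document; each statement's English description precedes it below -/
import Mathlib

section
/- Let h, k, d be integers with 0 ≤ h ≤ k−1 and d ≥ 2. Then 2·[ (h+1)·binom(d + k, k) − (k+1)·binom(d + h, h) ] ≥ (k−h)(h+1)(k+1), with equality if and only if d = 2. -/
private lemma claimA (g m d : ℕ) (hd : 2 ≤ d) :
    (g+3+m) * Nat.choose (d+g+1) g < (g+2) * Nat.choose (d+g+2+m) (g+1+m) := by
  induction m with
  | zero =>
    have h1 : (d+g+2) * Nat.choose (d+g+1) g = Nat.choose (d+g+2) (g+1) * (g+1) :=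
      Nat.add_one_mul_choose_eq (d+g+1) g
    have hc : 0 < Nat.choose (d+g+1) g := Nat.choose_pos (by omega)
    have hmul : (g+3)*(g+1) < (g+2)*(d+g+2) := by nlinarith [hd]
    have key : (g+3+0) * Nat.choose (d+g+1) g * (g+1)
        < (g+2) * Nat.choose (d+g+2) (g+1) * (g+1) := by
      calc (g+3+0) * Nat.choose (d+g+1) g * (g+1)
          = (g+3)*(g+1) * Nat.choose (d+g+1) g := by ring
        _ < (g+2)*(d+g+2) * Nat.choose (d+g+1) g := by
            exact Nat.mul_lt_mul_of_lt_of_le hmul (le_refl _) hc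
        _ = (g+2) * ((d+g+2) * Nat.choose (d+g+1) g) := by ring
        _ = (g+2) * (Nat.choose (d+g+2) (g+1) * (g+1)) := by rw [h1]
        _ = (g+2) * Nat.choose (d+g+2) (g+1) * (g+1) := by ring
    have := lt_of_mul_lt_mul_right key (Nat.zero_le (g+1))
    simpa using this
  | succ m ih =>
    have h1 : (d+g+2+m+1) * Nat.choose (d+g+2+m) (g+1+m)
        = Nat.choose (d+g+2+m+1) (g+1+m+1) * (g+1+m+1) :=
      Nat.add_one_mul_choose_eq (d+g+2+m) (g+1+m)
    have hc : 0 < Nat.choose (d+g+1) g := Nat.choose_pos (by omega)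
    have hcoef : (g+3+m+1)*(g+1+m+1) ≤ (g+3+m)*(d+g+2+m+1) := by nlinarith [hd]
    have key : (g+3+m+1) * Nat.choose (d+g+1) g * (g+1+m+1)
        < (g+2) * Nat.choose (d+g+2+m+1) (g+1+m+1) * (g+1+m+1) := by
      calc (g+3+m+1) * Nat.choose (d+g+1) g * (g+1+m+1)
          = (g+3+m+1)*(g+1+m+1) * Nat.choose (d+g+1) g := by ring
        _ ≤ (g+3+m)*(d+g+2+m+1) * Nat.choose (d+g+1) g :=
            Nat.mul_le_mul_right _ hcoef
        _ = (d+g+2+m+1) * ((g+3+m) * Nat.choose (d+g+1) g) := by ring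
        _ < (d+g+2+m+1) * ((g+2) * Nat.choose (d+g+2+m) (g+1+m)) := by
            exact Nat.mul_lt_mul_of_le_of_lt (le_refl _) ih (by omega)
        _ = (g+2) * ((d+g+2+m+1) * Nat.choose (d+g+2+m) (g+1+m)) := by ring
        _ = (g+2) * (Nat.choose (d+g+2+m+1) (g+1+m+1) * (g+1+m+1)) := by rw [h1]
        _ = (g+2) * Nat.choose (d+g+2+m+1) (g+1+m+1) * (g+1+m+1) := by ring
    have h2 := lt_of_mul_lt_mul_right key (Nat.zero_le (g+1+m+1))
    have e1 : d+g+2+(m+1) = d+g+2+m+1 := by omega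
    have e2 : g+1+(m+1) = g+1+m+1 := by omega
    rw [show g+3+(m+1) = g+3+m+1 by omega, e1, e2]
    exact h2

private lemma incr (h k d : ℕ) (hhk : h + 1 ≤ k) (hd : 2 ≤ d) :
    (h+1) * Nat.choose (d+k) k + (k+1) * Nat.choose (d+1+h) h
      < (h+1) * Nat.choose (d+1+k) k + (k+1) * Nat.choose (d+h) h := by
  rcases Nat.eq_zero_or_pos h with rfl | hp
  · obtain ⟨k', rfl⟩ : ∃ k', k = k' + 1 := ⟨k - 1, by omega⟩
    have pasK : Nat.choose (d+1+(k'+1)) (k'+1)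
        = Nat.choose (d+(k'+1)) k' + Nat.choose (d+(k'+1)) (k'+1) := by
      rw [show d+1+(k'+1) = (d+(k'+1))+1 by omega]
      exact Nat.choose_succ_succ _ _
    have hc : 0 < Nat.choose (d+(k'+1)) k' := Nat.choose_pos (by omega)
    simp only [Nat.choose_zero_right, pasK]
    nlinarith [hc]
  · obtain ⟨g, rfl⟩ : ∃ g, h = g + 1 := ⟨h - 1, by omega⟩
    obtain ⟨m, rfl⟩ : ∃ m, k = g + 2 + m := ⟨k - g - 2, by omega⟩
    have pasK : Nat.choose (d+1+(g+2+m)) (g+2+m)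
        = Nat.choose (d+g+2+m) (g+1+m) + Nat.choose (d+g+2+m) (g+2+m) := by
      rw [show d+1+(g+2+m) = (d+g+2+m)+1 by omega, show g+2+m = (g+1+m)+1 by omega]
      exact Nat.choose_succ_succ _ _
    have pasH : Nat.choose (d+1+(g+1)) (g+1)
        = Nat.choose (d+g+1) g + Nat.choose (d+g+1) (g+1) := by
      rw [show d+1+(g+1) = (d+g+1)+1 by omega]
      exact Nat.choose_succ_succ _ _
    have hA := claimA g m d hd
    rw [show d+(g+2+m) = d+g+2+m by omega, show d+(g+1) = d+g+1 by omega, pasK, pasH]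
    nlinarith [hA]

private lemma aux_le (h k : ℕ) (hhk : h + 1 ≤ k) :
    ∀ d, 2 ≤ d →
      (h+1) * Nat.choose (2+k) k + (k+1) * Nat.choose (d+h) h
        ≤ (h+1) * Nat.choose (d+k) k + (k+1) * Nat.choose (2+h) h := by
  intro d hd
  induction d, hd using Nat.le_induction with
  | base => omega
  | succ d hd ih =>
    have := incr h k d hhk hd
    omega

private lemma aux_lt (h k : ℕ) (hhk : h + 1 ≤ k) :
    ∀ d, 3 ≤ d →
      (h+1) * Nat.choose (2+k) k + (k+1) * Nat.choose (d+h) h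
        < (h+1) * Nat.choose (d+k) k + (k+1) * Nat.choose (2+h) h := by
  intro d hd
  induction d, hd using Nat.le_induction with
  | base =>
    have := incr h k 2 hhk (by omega)
    have e1 : (2:ℕ)+1+k = 3+k := by omega
    have e2 : (2:ℕ)+1+h = 3+h := by omega
    rw [e1, e2] at this
    omega
  | succ d hd ih =>
    have := incr h k d hhk (by omega)
    omega

private lemma two_mul_choose (k : ℕ) : 2 * Nat.choose (2+k) k = (k+1)*(k+2) := by
  have h1 : Nat.choose (2+k) k = Nat.choose (k+2) 2 := by
    rw [← Nat.choose_symm_add (a := 2) (b := k), show 2+k = k+2 by omega]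
  have h2 : (k+2) * Nat.choose (k+1) 1 = Nat.choose (k+2) 2 * 2 :=
    Nat.add_one_mul_choose_eq (k+1) 1
  rw [Nat.choose_one_right] at h2
  rw [h1]
  linarith [h2]

/-- For `0 ≤ h ≤ k-1` and `d ≥ 2`,
`2·[(h+1)·C(d+k,k) - (k+1)·C(d+h,h)] ≥ (k-h)(h+1)(k+1)`, with equality iff `d = 2`. -/
theorem stmt_9 (h k d : ℕ) (hhk : h + 1 ≤ k) (hd : 2 ≤ d) :
    ((k : ℤ) - (h : ℤ)) * ((h : ℤ) + 1) * ((k : ℤ) + 1) ≤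
      2 * (((h : ℤ) + 1) * ((d + k).choose k : ℤ) - ((k : ℤ) + 1) * ((d + h).choose h : ℤ)) ∧
    (2 * (((h : ℤ) + 1) * ((d + k).choose k : ℤ) - ((k : ℤ) + 1) * ((d + h).choose h : ℤ)) =
        ((k : ℤ) - (h : ℤ)) * ((h : ℤ) + 1) * ((k : ℤ) + 1) ↔ d = 2) := by
  have e2k : (2 : ℤ) * ((2+k).choose k : ℤ) = ((k:ℤ)+1)*((k:ℤ)+2) := by
    exact_mod_cast congrArg (Nat.cast : ℕ → ℤ) (two_mul_choose k)
  have e2h : (2 : ℤ) * ((2+h).choose h : ℤ) = ((h:ℤ)+1)*((h:ℤ)+2) := by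
    exact_mod_cast congrArg (Nat.cast : ℕ → ℤ) (two_mul_choose h)
  have hbase : ((k:ℤ) - h) * ((h:ℤ)+1) * ((k:ℤ)+1)
      = 2 * (((h:ℤ)+1) * ((2+k).choose k : ℤ) - ((k:ℤ)+1) * ((2+h).choose h : ℤ)) := by
    linear_combination ((k:ℤ)+1) * e2h - ((h:ℤ)+1) * e2k
  have hle : (((h:ℤ)+1) * ((2+k).choose k : ℤ) + ((k:ℤ)+1) * ((d+h).choose h : ℤ))
      ≤ (((h:ℤ)+1) * ((d+k).choose k : ℤ) + ((k:ℤ)+1) * ((2+h).choose h : ℤ)) := by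
    exact_mod_cast aux_le h k hhk d hd
  constructor
  · rw [hbase]; linarith
  · constructor
    · intro heq
      by_contra hne
      have hd3 : 3 ≤ d := by omega
      have hlt : (((h:ℤ)+1) * ((2+k).choose k : ℤ) + ((k:ℤ)+1) * ((d+h).choose h : ℤ))
          < (((h:ℤ)+1) * ((d+k).choose k : ℤ) + ((k:ℤ)+1) * ((2+h).choose h : ℤ)) := by
        exact_mod_cast aux_lt h k hhk d hd3
      rw [hbase] at heq
      linarith
    · rintro rfl
      exact hbase.symm
end

section
/- Let h, k, d be integers with 0 ≤ h ≤ k−1 and d ≥ 3. Then 6·[ (h+1)·binom(d + k, k) − (k+1)·binom(d + h, h) ] ≥ (k−h)(h+1)(k+1)(k + h + 5), with equality if and only if d = 3. -/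
lemma six_choose (k : ℕ) : (k+3).choose 3 * 6 = (k+1)*(k+2)*(k+3) := by
  have h3 : 3 ≤ k + 3 := by omega
  have H := Nat.choose_mul_factorial_mul_factorial h3
  have h1 : (k+3) - 3 = k := by omega
  rw [h1] at H
  have h2 : (3 : ℕ).factorial = 6 := rfl
  rw [h2] at H
  have h4 : (k+3).factorial = (k+1)*(k+2)*(k+3) * k.factorial := by
    simp [Nat.factorial_succ]; ring
  rw [h4] at H
  exact Nat.eq_of_mul_eq_mul_right (Nat.factorial_pos k) H

lemma mono_nat (h k d : ℕ) (hhk : h + 1 ≤ k) :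
    (h+1) * ((d+k).choose k) + (k+1) * ((d+1+h).choose h) <
    (h+1) * ((d+1+k).choose k) + (k+1) * ((d+h).choose h) := by
  obtain ⟨k', rfl⟩ : ∃ k', k = k' + 1 := ⟨k - 1, by omega⟩
  have ek : d+1+(k'+1) = (d+k'+1)+1 := by omega
  have ek2 : d+(k'+1) = (d+k')+1 := by omega
  rw [ek, ek2, Nat.choose_succ_succ' (d+k'+1) k']
  have hk1 : (d+k'+1).choose (k'+1) = (d+k').choose k' + (d+k').choose (k'+1) := by
    rw [Nat.choose_succ_succ']
  cases h with
  | zero =>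
      simp only [Nat.choose_zero_right]
      have : 0 < (d+k'+1).choose k' := Nat.choose_pos (by omega)
      nlinarith [this]
  | succ h' =>
      have eh : d+1+(h'+1) = (d+h'+1)+1 := by omega
      have eh2 : d+(h'+1) = (d+h')+1 := by omega
      rw [eh, eh2, Nat.choose_succ_succ' (d+h'+1) h']
      -- reduces to (k+1) * C(d+h'+1, h') < (h+1) * C(d+k'+1, k')
      have key : (k'+1+1) * ((d+h'+1).choose h') < (h'+1+1) * ((d+k'+1).choose k') := by
        have hd1 : 0 < d + 1 := by omega
        apply Nat.lt_of_mul_lt_mul_right (a := d+1)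
        have idh : (d+h'+1).choose (h'+1) * (h'+1) = (d+h'+1).choose h' * (d+1) := by
          have := Nat.choose_succ_right_eq (d+h'+1) h'
          rw [show d+h'+1-h' = d+1 from by omega] at this
          exact this
        have idk : (d+k'+1).choose (k'+1) * (k'+1) = (d+k'+1).choose k' * (d+1) := by
          have := Nat.choose_succ_right_eq (d+k'+1) k'
          rw [show d+k'+1-k' = d+1 from by omega] at this
          exact this
        calc (k'+1+1) * ((d+h'+1).choose h') * (d+1)
            = (k'+1+1) * ((d+h'+1).choose (h'+1) * (h'+1)) := by rw [idh]; ring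
          _ < (h'+1+1) * ((d+k'+1).choose (k'+1) * (k'+1)) := by
              have hle : (d+h'+1).choose (h'+1) ≤ (d+k'+1).choose (k'+1) := by
                rw [show d+h'+1 = (h'+1)+d from by omega, Nat.choose_symm_add,
                    show d+k'+1 = (k'+1)+d from by omega, Nat.choose_symm_add]
                exact Nat.choose_le_choose d (by omega)
              have hpos : 0 < (d+h'+1).choose (h'+1) := Nat.choose_pos (by omega)
              have hco : (k'+1+1) * (h'+1) < (h'+1+1) * (k'+1) := by nlinarith [hhk]
              calc (k'+1+1) * ((d+h'+1).choose (h'+1) * (h'+1))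
                  = ((k'+1+1) * (h'+1)) * ((d+h'+1).choose (h'+1)) := by ring
                _ < ((h'+1+1) * (k'+1)) * ((d+h'+1).choose (h'+1)) :=
                    (Nat.mul_lt_mul_right hpos).mpr hco
                _ ≤ ((h'+1+1) * (k'+1)) * ((d+k'+1).choose (k'+1)) :=
                    Nat.mul_le_mul_left _ hle
                _ = (h'+1+1) * ((d+k'+1).choose (k'+1) * (k'+1)) := by ring
          _ = (h'+1+1) * ((d+k'+1).choose k') * (d+1) := by rw [idk]; ring
      nlinarith [key]

/-- For `0 ≤ h ≤ k-1` and `d ≥ 3`,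
`6·[(h+1)·C(d+k,k) - (k+1)·C(d+h,h)] ≥ (k-h)(h+1)(k+1)(k+h+5)`, with equality iff
`d = 3`. -/
theorem stmt_10 (h k d : ℕ) (hhk : h + 1 ≤ k) (hd : 3 ≤ d) :
    ((k : ℤ) - (h : ℤ)) * ((h : ℤ) + 1) * ((k : ℤ) + 1) * ((k : ℤ) + (h : ℤ) + 5) ≤
      6 * (((h : ℤ) + 1) * ((d + k).choose k : ℤ) - ((k : ℤ) + 1) * ((d + h).choose h : ℤ)) ∧
    (6 * (((h : ℤ) + 1) * ((d + k).choose k : ℤ) - ((k : ℤ) + 1) * ((d + h).choose h : ℤ)) =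
        ((k : ℤ) - (h : ℤ)) * ((h : ℤ) + 1) * ((k : ℤ) + 1) * ((k : ℤ) + (h : ℤ) + 5) ↔
      d = 3) := by
  have step : ∀ e : ℕ,
      ((h:ℤ)+1) * ((e+k).choose k : ℤ) - ((k:ℤ)+1) * ((e+h).choose h : ℤ) + 1 ≤
      ((h:ℤ)+1) * ((e+1+k).choose k : ℤ) - ((k:ℤ)+1) * ((e+1+h).choose h : ℤ) := by
    intro e
    have H := mono_nat h k e hhk
    have H' : ((h:ℤ)+1) * ((e+k).choose k : ℤ) + ((k:ℤ)+1) * ((e+1+h).choose h : ℤ) <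
        ((h:ℤ)+1) * ((e+1+k).choose k : ℤ) + ((k:ℤ)+1) * ((e+h).choose h : ℤ) := by
      exact_mod_cast H
    linarith
  have grow : ∀ n : ℕ,
      ((h:ℤ)+1) * ((3+k).choose k : ℤ) - ((k:ℤ)+1) * ((3+h).choose h : ℤ) + n ≤
      ((h:ℤ)+1) * ((3+n+k).choose k : ℤ) - ((k:ℤ)+1) * ((3+n+h).choose h : ℤ) := by
    intro n
    induction n with
    | zero => simp
    | succ m ih =>
        have := step (3+m)
        push_cast
        push_cast at ih
        rw [show 3+(m+1) = (3+m)+1 from rfl]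
        linarith
  have base : 6 * (((h:ℤ)+1) * ((3+k).choose k : ℤ) - ((k:ℤ)+1) * ((3+h).choose h : ℤ)) =
      ((k:ℤ) - h) * ((h:ℤ)+1) * ((k:ℤ)+1) * ((k:ℤ)+h+5) := by
    have e1 : 3 + k = k + 3 := by omega
    have e2 : 3 + h = h + 3 := by omega
    rw [e1, e2, Nat.choose_symm_add, Nat.choose_symm_add]
    have hk : ((k+3).choose 3 : ℤ) * 6 = ((k:ℤ)+1)*((k:ℤ)+2)*((k:ℤ)+3) := by
      exact_mod_cast six_choose k
    have hh : ((h+3).choose 3 : ℤ) * 6 = ((h:ℤ)+1)*((h:ℤ)+2)*((h:ℤ)+3) := by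
      exact_mod_cast six_choose h
    linear_combination ((h:ℤ)+1) * hk - ((k:ℤ)+1) * hh
  obtain ⟨n, rfl⟩ : ∃ n, d = 3 + n := ⟨d - 3, by omega⟩
  have G := grow n
  constructor
  · linarith
  · constructor
    · intro heq
      by_contra hne
      have hn : 1 ≤ n := by omega
      have : (1 : ℤ) ≤ (n : ℤ) := by exact_mod_cast hn
      linarith
    · intro heq
      have hn : n = 0 := by omega
      subst hn
      simpa using base
end

section
/- Let h, k be integers with 0 ≤ h ≤ k−1. Then the integer-valued function f(d) := (h+1)·binom(d + k, k) − (k+1)·binom(d + h, h) satisfies f(1) = 0 and is strictly increasing for d ≥ 1, i.e., f(d+1) > f(d) for every integer d ≥ 1; in particular f(d) > 0 for every integer d ≥ 2. -/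
/-- Key inequality: `(k+1)·C(d+h, d+1) < (h+1)·C(d+k, d+1)` when `h+1 ≤ k`. -/
lemma stmt11_key (h d : ℕ) : ∀ k, h + 1 ≤ k →
    (k + 1) * ((d + h).choose (d + 1)) < (h + 1) * ((d + k).choose (d + 1)) := by
  intro k hk
  induction k, hk using Nat.le_induction with
  | base =>
    -- k = h+1
    have hpas : (d + (h + 1)).choose (d + 1)
        = (d + h).choose d + (d + h).choose (d + 1) := by
      have : d + (h + 1) = (d + h) + 1 := by ring
      rw [this, Nat.choose_succ_succ]
    have hid : (d + h).choose (d + 1) * (d + 1) = (d + h).choose d * ((d + h) - d) :=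
      Nat.choose_succ_right_eq (d + h) d
    have hsub : (d + h) - d = h := by omega
    rw [hsub] at hid
    have hBpos : 0 < (d + h).choose d := Nat.choose_pos (by omega)
    have hA : (d + h).choose (d + 1) ≤ h * (d + h).choose d := by
      calc (d + h).choose (d + 1) ≤ (d + h).choose (d + 1) * (d + 1) :=
            Nat.le_mul_of_pos_right _ (by omega)
        _ = (d + h).choose d * h := hid
        _ = h * (d + h).choose d := by ring
    rw [hpas]
    nlinarith [hA, hBpos]
  | succ k hk ih =>
    have hpas : (d + (k + 1)).choose (d + 1)
        = (d + k).choose d + (d + k).choose (d + 1) := by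
      have : d + (k + 1) = (d + k) + 1 := by ring
      rw [this, Nat.choose_succ_succ]
    have hid : (d + h).choose (d + 1) * (d + 1) = (d + h).choose d * ((d + h) - d) :=
      Nat.choose_succ_right_eq (d + h) d
    have hsub : (d + h) - d = h := by omega
    rw [hsub] at hid
    have hmono : (d + h).choose d ≤ (d + k).choose d :=
      Nat.choose_le_choose d (by omega)
    have hA : (d + h).choose (d + 1) ≤ (h + 1) * (d + k).choose d := by
      calc (d + h).choose (d + 1) ≤ (d + h).choose (d + 1) * (d + 1) :=
            Nat.le_mul_of_pos_right _ (by omega)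
        _ = (d + h).choose d * h := hid
        _ ≤ (d + k).choose d * (h + 1) := by
            exact Nat.mul_le_mul hmono (by omega)
        _ = (h + 1) * (d + k).choose d := by ring
    rw [hpas]
    nlinarith [ih, hA]

/-- Pascal-type identity valid for all `h`: `C(d+1+h, h) = C(d+h, h) + C(d+h, d+1)`. -/
lemma stmt11_pascal (d h : ℕ) :
    (d + 1 + h).choose h = (d + h).choose h + (d + h).choose (d + 1) := by
  cases h with
  | zero =>
    simp [Nat.choose_eq_zero_of_lt (by omega : d < d + 1)]
  | succ m =>
    have h1 : d + 1 + (m + 1) = (d + (m + 1)) + 1 := by ring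
    rw [h1, Nat.choose_succ_succ]
    have h2 : (d + (m + 1)).choose m = (d + (m + 1)).choose (d + 1) := by
      have := Nat.choose_symm (n := d + (m + 1)) (k := d + 1) (by omega)
      have hsub : d + (m + 1) - (d + 1) = m := by omega
      rw [hsub] at this
      exact this
    rw [h2]
    ring

/-- The function `f(d) = (h+1)·C(d+k,k) - (k+1)·C(d+h,h)` vanishes at
`d = 1`, is strictly increasing for `d ≥ 1`, and hence is positive for `d ≥ 2`. -/
theorem stmt_11 (h k : ℕ) (hhk : h + 1 ≤ k)
    (f : ℕ → ℤ)
    (hf : ∀ d, f d = ((h : ℤ) + 1) * ((d + k).choose k : ℤ)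
        - ((k : ℤ) + 1) * ((d + h).choose h : ℤ)) :
    f 1 = 0 ∧ (∀ d : ℕ, 1 ≤ d → f d < f (d + 1)) ∧ (∀ d : ℕ, 2 ≤ d → 0 < f d) := by
  have hchoose1 : ∀ m : ℕ, (1 + m).choose m = m + 1 := by
    intro m
    have := Nat.choose_symm (n := 1 + m) (k := 1) (by omega)
    have hsub : 1 + m - 1 = m := by omega
    rw [hsub] at this
    rw [this, Nat.choose_one_right]
    omega
  have hf1 : f 1 = 0 := by
    rw [hf, hchoose1, hchoose1]
    push_cast
    ring
  have hmono : ∀ d : ℕ, 1 ≤ d → f d < f (d + 1) := by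
    intro d _
    rw [hf, hf]
    rw [show d + 1 + k = d + 1 + k from rfl]
    rw [stmt11_pascal d k, stmt11_pascal d h]
    have hkey := stmt11_key h d k hhk
    push_cast
    have : ((k : ℤ) + 1) * ((d + h).choose (d + 1) : ℤ)
        < ((h : ℤ) + 1) * ((d + k).choose (d + 1) : ℤ) := by
      exact_mod_cast hkey
    nlinarith [this]
  refine ⟨hf1, hmono, ?_⟩
  intro d hd
  induction d, hd using Nat.le_induction with
  | base =>
    have h2 := hmono 1 le_rfl
    rw [hf1] at h2
    simpa using h2
  | succ d hd ih =>
    have := hmono d (by omega)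
    omega
end

section
/- Let m, k, h, d be integers with d ≥ 1, 0 ≤ h ≤ k−1 and k ≤ m, and let L_1, L_2 ⊆ ℂ^{m+1} be ℂ-linear subspaces with dim L_1 = dim L_2 = k+1 and dim(L_1 ∩ L_2) = h+1. Then the ℂ-vector subspace { g ∈ S_d : g vanishes identically on L_1 and on L_2 } of the space S_d of homogeneous polynomials of degree d in ℂ[x_0, …, x_m] has dimension binom(d + m, m) − 2·binom(d + k, k) + binom(d + h, h). -/
/-!
Extend a basis of `L₁ ⊓ L₂` to bases of `L₁` and of `L₂`; their union is linearly independent,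
so it extends to a basis of the whole space. After the corresponding linear change of variables,
which preserves degrees, `L₁` and `L₂` become coordinate subspaces for index sets `A`, `B` with
`|A| = |B| = k + 1` and `|A ∩ B| = h + 1`. Over an infinite field a polynomial vanishes on the
coordinate subspace of `A` iff every monomial involving only variables from `A` has coefficient
zero. Hence the forms in question are spanned by the degree-`d` monomials involving a variable
outside `A` and one outside `B`, and inclusion–exclusion counts these.
-/

open MvPolynomial Module Submodule Finset

noncomputable section

section AdaptedBasis

variable {K V : Type*} [Field K] [AddCommGroup V] [Module K V]

theorem exists_linearIndepOn_union_span_eq (L₁ L₂ : Submodule K V) :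
    ∃ s₁ s₂ : Set V, LinearIndepOn K id (s₁ ∪ s₂) ∧ span K s₁ = L₁ ∧ span K s₂ = L₂ := by
  obtain ⟨s₀, hs₀W, hs₀span, hs₀⟩ :=
    exists_linearIndependent K ((L₁ ⊓ L₂ : Submodule K V) : Set V)
  rw [span_eq] at hs₀span
  replace hs₀ : LinearIndepOn K id s₀ := hs₀
  have hs₀L₁ : s₀ ⊆ L₁ := hs₀W.trans fun _ hx => hx.1
  have hs₀L₂ : s₀ ⊆ L₂ := hs₀W.trans fun _ hx => hx.2
  set s₁ := hs₀.extend hs₀L₁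
  set s₂ := hs₀.extend hs₀L₂
  have hspan₁ : span K s₁ = L₁ := by rw [hs₀.span_extend_eq_span, span_eq]
  have hspan₂ : span K s₂ = L₂ := by rw [hs₀.span_extend_eq_span, span_eq]
  have hs₀s₁ : s₀ ⊆ s₁ := hs₀.subset_extend hs₀L₁
  have hs₂ : s₂ = s₀ ∪ (s₂ \ s₀) := (Set.union_sdiff_cancel (hs₀.subset_extend hs₀L₂)).symm
  have hdisj₀ : Disjoint (span K s₀) (span K (s₂ \ s₀)) :=
    ((linearIndepOn_id_union_iff Set.disjoint_sdiff_right).1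
      (hs₂ ▸ hs₀.linearIndepOn_extend hs₀L₂)).2.2
  have hdisj : Disjoint (span K s₁) (span K (s₂ \ s₀)) := by
    refine Submodule.disjoint_def.2 fun x hx₁ hx₂ => Submodule.disjoint_def.1 hdisj₀ x ?_ hx₂
    exact hs₀span ▸ ⟨hspan₁ ▸ hx₁, hspan₂ ▸ span_mono Set.sdiff_subset hx₂⟩
  refine ⟨s₁, s₂, ?_, hspan₁, hspan₂⟩
  rw [show s₁ ∪ s₂ = s₁ ∪ (s₂ \ s₀) by grind]
  exact (hs₀.linearIndepOn_extend hs₀L₁).id_union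
    ((hs₀.linearIndepOn_extend hs₀L₂).mono Set.sdiff_subset) hdisj

theorem Module.Basis.exists_span_image_eq_pair {σ : Type*} [Fintype σ] (b₀ : Basis σ K V)
    (L₁ L₂ : Submodule K V) :
    ∃ (b : Basis σ K V) (A B : Finset σ), span K (b '' A) = L₁ ∧ span K (b '' B) = L₂ := by
  classical
  obtain ⟨s₁, s₂, hli, rfl, rfl⟩ := exists_linearIndepOn_union_span_eq L₁ L₂
  let b := (Basis.extend hli).reindex ((Basis.extend hli).indexEquiv b₀)
  have hrange : s₁ ∪ s₂ ⊆ Set.range b := by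
    rw [Basis.range_reindex, Basis.range_extend]
    exact hli.subset_extend _
  have hpre : ∀ s ⊆ s₁ ∪ s₂, ∃ A : Finset σ, b '' A = s := fun s hs =>
    ⟨univ.filter (fun i => b i ∈ s), by
      ext x
      simp only [coe_filter, mem_univ, true_and, Set.mem_image, Set.mem_ofPred_eq]
      constructor
      · rintro ⟨i, hi, rfl⟩
        exact hi
      · intro hx
        obtain ⟨i, rfl⟩ := hrange (hs hx)
        exact ⟨i, hx, rfl⟩⟩
  obtain ⟨A, hA⟩ := hpre s₁ Set.subset_union_left
  obtain ⟨B, hB⟩ := hpre s₂ Set.subset_union_right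
  exact ⟨b, A, B, by rw [hA], by rw [hB]⟩

end AdaptedBasis

section CoordSubspace

variable {K σ : Type*} [Field K] [Fintype σ]

variable (K) in
def coordSubspace (A : Finset σ) : Submodule K (σ → K) :=
  span K (Pi.basisFun K σ '' A)

theorem mem_coordSubspace {A : Finset σ} {v : σ → K} :
    v ∈ coordSubspace K A ↔ ∀ i ∉ A, v i = 0 := by
  rw [coordSubspace, Basis.mem_span_image]
  simp [Set.subset_def, not_imp_comm]

theorem coordSubspace_inf [DecidableEq σ] (A B : Finset σ) :
    coordSubspace K A ⊓ coordSubspace K B = coordSubspace K (A ∩ B) := by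
  ext v
  simp only [Submodule.mem_inf, mem_coordSubspace, mem_inter, not_and_or]
  grind

theorem finrank_coordSubspace (A : Finset σ) : finrank K (coordSubspace K A) = #A := by
  have := finrank_span_eq_card
    ((Pi.basisFun K σ).linearIndependent.comp _ Subtype.val_injective (ι' := (A : Set σ)))
  rw [Set.range_comp, Subtype.range_coe] at this
  simp only [coe_sort_coe, Fintype.card_coe] at this
  exact this

theorem map_coordSubspace_basisFun_equiv {V : Type*} [AddCommGroup V] [Module K V]
    (b : Basis σ K V) (A : Finset σ) :
    (coordSubspace K A).map ((Pi.basisFun K σ).equiv b (Equiv.refl σ)).toLinearMap =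
      span K (b '' A) := by
  rw [coordSubspace, Submodule.map_span, Set.image_image]
  simp

end CoordSubspace

theorem Finset.finsuppAntidiag_inter {ι μ : Type*} [DecidableEq ι] [AddCommMonoid μ]
    [HasAntidiagonal μ] [DecidableEq μ] (s t : Finset ι) (n : μ) :
    s.finsuppAntidiag n ∩ t.finsuppAntidiag n = (s ∩ t).finsuppAntidiag n := by
  ext f
  simp only [mem_inter, mem_finsuppAntidiag', subset_inter_iff]
  tauto

theorem Finset.card_finsuppAntidiag_of_card_eq {ι : Type*} [DecidableEq ι] {s : Finset ι} {k : ℕ}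
    (hs : #s = k + 1) (d : ℕ) : #(s.finsuppAntidiag d) = (d + k).choose k := by
  rw [card_finsuppAntidiag_nat_eq_choose, hs, show k + 1 + d - 1 = d + k by omega,
    Nat.choose_symm_add]

theorem Finset.card_sdiff_finsuppAntidiag_union_add {ι : Type*} [Fintype ι] [DecidableEq ι]
    (A B : Finset ι) (d : ℕ) :
    #(univ.finsuppAntidiag d \ (A.finsuppAntidiag d ∪ B.finsuppAntidiag d)) +
        #(A.finsuppAntidiag d) + #(B.finsuppAntidiag d) =
      #((univ : Finset ι).finsuppAntidiag d) + #((A ∩ B).finsuppAntidiag d) := by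
  have hsub : A.finsuppAntidiag d ∪ B.finsuppAntidiag d ⊆ univ.finsuppAntidiag d :=
    union_subset (finsuppAntidiag_mono (subset_univ A) d) (finsuppAntidiag_mono (subset_univ B) d)
  have := card_sdiff_add_card_eq_card hsub
  have := card_union_add_card_inter (A.finsuppAntidiag d) (B.finsuppAntidiag d)
  rw [finsuppAntidiag_inter] at this
  omega

namespace MvPolynomial

variable {K σ : Type*} [Field K]

variable (K) in
def vanishingSubmodule (L : Submodule K (σ → K)) : Submodule K (MvPolynomial σ K) :=
  ⨅ v ∈ L, LinearMap.ker (aeval (R := K) v).toLinearMap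

theorem mem_vanishingSubmodule {L : Submodule K (σ → K)} {p : MvPolynomial σ K} :
    p ∈ vanishingSubmodule K L ↔ ∀ v ∈ L, eval v p = 0 := by
  simp [vanishingSubmodule]

theorem finrank_restrictSupport (s : Finset (σ →₀ ℕ)) :
    finrank K (restrictSupport K (s : Set (σ →₀ ℕ))) = #s := by
  simp [finrank_eq_card_basis (basisRestrictSupport K (s : Set (σ →₀ ℕ)))]

section ZeroOutside

variable [DecidableEq σ]

def zeroOutside (A : Finset σ) : MvPolynomial σ K →ₐ[K] MvPolynomial σ K :=
  aeval fun i => if i ∈ A then X i else 0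

theorem zeroOutside_monomial (A : Finset σ) (β : σ →₀ ℕ) (c : K) :
    zeroOutside A (monomial β c) = if β.support ⊆ A then monomial β c else 0 := by
  rw [zeroOutside, aeval_monomial]
  split_ifs with hβ
  · rw [monomial_eq, algebraMap_eq]
    congr 1
    exact Finsupp.prod_congr fun i hi => by rw [if_pos (hβ hi)]
  · obtain ⟨i, hi, hiA⟩ := Finset.not_subset.1 hβ
    refine mul_eq_zero_of_right _ (Finset.prod_eq_zero hi ?_)
    show (if i ∈ A then X i else 0) ^ β i = 0
    rw [if_neg hiA, zero_pow (Finsupp.mem_support_iff.1 hi)]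

theorem coeff_zeroOutside (A : Finset σ) (α : σ →₀ ℕ) (p : MvPolynomial σ K) :
    coeff α (zeroOutside A p) = if α.support ⊆ A then coeff α p else 0 := by
  induction p using MvPolynomial.induction_on' with
  | monomial β c =>
    rw [zeroOutside_monomial]
    obtain rfl | hβα := eq_or_ne β α
    · split_ifs <;> simp
    · split_ifs <;> simp [coeff_monomial, hβα]
  | add p q hp hq => simp only [map_add, coeff_add, hp, hq]; split_ifs <;> simp

theorem eval_zeroOutside (A : Finset σ) (x : σ → K) (p : MvPolynomial σ K) :
    eval x (zeroOutside A p) = eval (fun i => if i ∈ A then x i else 0) p := by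
  change aeval x (zeroOutside A p) = aeval _ p
  rw [zeroOutside, ← AlgHom.comp_apply, comp_aeval]
  congr 2
  funext i
  split_ifs <;> simp

end ZeroOutside

section LinearSubst

variable [Fintype σ]

def linearSubst (f : (σ → K) →ₗ[K] (σ → K)) : MvPolynomial σ K →ₐ[K] MvPolynomial σ K :=
  aeval fun i => ∑ j, C (f (Pi.basisFun K σ j) i) * X j

theorem eval_linearSubst (f : (σ → K) →ₗ[K] (σ → K)) (x : σ → K) (p : MvPolynomial σ K) :
    eval x (linearSubst f p) = eval (f x) p := by
  change aeval x (linearSubst f p) = aeval (f x) p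
  rw [linearSubst, ← AlgHom.comp_apply, comp_aeval]
  congr 2
  funext i
  conv_rhs => rw [← (Pi.basisFun K σ).sum_repr x]
  simp [mul_comm]

theorem IsHomogeneous.linearSubst {p : MvPolynomial σ K} {d : ℕ} (hp : p.IsHomogeneous d)
    (f : (σ → K) →ₗ[K] (σ → K)) : (linearSubst f p).IsHomogeneous d := by
  rw [MvPolynomial.linearSubst]
  simpa only [one_mul] using hp.aeval _ fun i =>
    IsHomogeneous.sum _ _ _ fun j _ => (isHomogeneous_X K j).C_mul (f (Pi.basisFun K σ j) i)

theorem comap_linearSubst_vanishingSubmodule (f : (σ → K) →ₗ[K] (σ → K))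
    (L : Submodule K (σ → K)) :
    (vanishingSubmodule K L).comap (linearSubst f).toLinearMap =
      vanishingSubmodule K (L.map f) := by
  ext p
  simp [mem_vanishingSubmodule, eval_linearSubst]

variable [Infinite K]

theorem linearSubst_linearSubst (f g : (σ → K) →ₗ[K] (σ → K)) (p : MvPolynomial σ K) :
    linearSubst f (linearSubst g p) = linearSubst (g ∘ₗ f) p :=
  funext fun x => by simp only [eval_linearSubst, LinearMap.comp_apply]

theorem linearSubst_id (p : MvPolynomial σ K) : linearSubst LinearMap.id p = p :=
  funext fun x => by rw [eval_linearSubst, LinearMap.id_apply]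

def linearSubstEquiv (e : (σ → K) ≃ₗ[K] (σ → K)) : MvPolynomial σ K ≃ₐ[K] MvPolynomial σ K :=
  AlgEquiv.ofAlgHom (linearSubst e) (linearSubst e.symm)
    (AlgHom.ext fun p => by simp [linearSubst_linearSubst, linearSubst_id])
    (AlgHom.ext fun p => by simp [linearSubst_linearSubst, linearSubst_id])

theorem comap_linearSubst_homogeneousSubmodule (e : (σ → K) ≃ₗ[K] (σ → K)) (d : ℕ) :
    (homogeneousSubmodule σ K d).comap (linearSubst e.toLinearMap).toLinearMap =
      homogeneousSubmodule σ K d := by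
  ext p
  refine ⟨fun hp => ?_, fun hp => hp.linearSubst _⟩
  rw [mem_homogeneousSubmodule, ← (linearSubstEquiv e).symm_apply_apply p]
  exact IsHomogeneous.linearSubst hp _

theorem finrank_homogeneousSubmodule_inf_vanishingSubmodule_map (e : (σ → K) ≃ₗ[K] (σ → K))
    (L₁ L₂ : Submodule K (σ → K)) (d : ℕ) :
    finrank K ↥(homogeneousSubmodule σ K d ⊓ vanishingSubmodule K (L₁.map e.toLinearMap) ⊓
        vanishingSubmodule K (L₂.map e.toLinearMap)) =
      finrank K ↥(homogeneousSubmodule σ K d ⊓ vanishingSubmodule K L₁ ⊓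
        vanishingSubmodule K L₂) := by
  have hΦ : (linearSubst e.toLinearMap).toLinearMap =
      (linearSubstEquiv e).toLinearEquiv.toLinearMap := rfl
  rw [← comap_linearSubst_vanishingSubmodule, ← comap_linearSubst_vanishingSubmodule]
  conv_lhs => rw [← comap_linearSubst_homogeneousSubmodule e, ← comap_inf, ← comap_inf, hΦ,
    comap_equiv_eq_map_symm]
  exact LinearEquiv.finrank_map_eq _ _

end LinearSubst

section VanishingOnCoordSubspace

variable [Fintype σ] [DecidableEq σ] [Infinite K]

theorem mem_vanishingSubmodule_coordSubspace {A : Finset σ} {p : MvPolynomial σ K} :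
    p ∈ vanishingSubmodule K (coordSubspace K A) ↔
      ∀ α : σ →₀ ℕ, α.support ⊆ A → coeff α p = 0 := by
  have hproj (x : σ → K) : (fun i => if i ∈ A then x i else 0) ∈ coordSubspace K A :=
    mem_coordSubspace.2 fun i hi => if_neg hi
  calc p ∈ vanishingSubmodule K (coordSubspace K A) ↔ zeroOutside A p = 0 := by
        rw [mem_vanishingSubmodule]
        refine ⟨fun h => funext fun x => ?_, fun h v hv => ?_⟩
        · rw [eval_zeroOutside, h _ (hproj x), map_zero]
        · have hv' : (fun i => if i ∈ A then v i else 0) = v :=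
            _root_.funext fun i => ite_eq_left_iff.2 fun hi => (mem_coordSubspace.1 hv i hi).symm
          rw [← hv', ← eval_zeroOutside, h, map_zero]
    _ ↔ _ := by simp [MvPolynomial.ext_iff, coeff_zeroOutside]

theorem vanishingSubmodule_coordSubspace (A : Finset σ) :
    vanishingSubmodule K (coordSubspace K A) = restrictSupport K {α | ¬α.support ⊆ A} := by
  ext p
  rw [mem_vanishingSubmodule_coordSubspace, mem_restrictSupport_iff]
  simp [Set.subset_def, not_imp_comm]

theorem homogeneousSubmodule_inf_vanishingSubmodule_coordSubspace (A B : Finset σ) (d : ℕ) :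
    homogeneousSubmodule σ K d ⊓ vanishingSubmodule K (coordSubspace K A) ⊓
        vanishingSubmodule K (coordSubspace K B) =
      restrictSupport K
        ↑(univ.finsuppAntidiag d \ (A.finsuppAntidiag d ∪ B.finsuppAntidiag d)) := by
  suffices h : {α : σ →₀ ℕ | α.degree = d} ∩ {α | ¬α.support ⊆ A} ∩ {α | ¬α.support ⊆ B} =
      ↑(univ.finsuppAntidiag d \ (A.finsuppAntidiag d ∪ B.finsuppAntidiag d)) by
    rw [homogeneousSubmodule_eq_finsupp_supported, vanishingSubmodule_coordSubspace,
      vanishingSubmodule_coordSubspace, ← h]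
    ext p
    simp only [Submodule.mem_inf, mem_restrictSupport_iff, Set.subset_inter_iff]
    rfl
  ext α
  simp only [Set.mem_inter_iff, Set.mem_ofPred_eq, coe_sdiff, coe_union, Set.mem_sdiff,
    Set.mem_union, mem_coe, mem_finsuppAntidiag', subset_univ, and_true, Finsupp.degree_apply]
  tauto

end VanishingOnCoordSubspace

end MvPolynomial

end

theorem stmt_13_general (m k h d : ℕ)
    (L₁ L₂ : Submodule ℂ (Fin (m + 1) → ℂ))
    (hL₁ : Module.finrank ℂ L₁ = k + 1) (hL₂ : Module.finrank ℂ L₂ = k + 1)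
    (hmeet : Module.finrank ℂ ↥(L₁ ⊓ L₂) = h + 1) :
    (Module.finrank ℂ
        ↥(homogeneousSubmodule (Fin (m + 1)) ℂ d ⊓
          (⨅ v ∈ L₁, LinearMap.ker (aeval (R := ℂ) v).toLinearMap) ⊓
          (⨅ v ∈ L₂, LinearMap.ker (aeval (R := ℂ) v).toLinearMap)) : ℤ) =
      ((d + m).choose m : ℤ) - 2 * ((d + k).choose k : ℤ) + ((d + h).choose h : ℤ) := by
  obtain ⟨b, A, B, hA, hB⟩ := (Pi.basisFun ℂ (Fin (m + 1))).exists_span_image_eq_pair L₁ L₂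
  let e := (Pi.basisFun ℂ (Fin (m + 1))).equiv b (Equiv.refl _)
  obtain rfl : L₁ = (coordSubspace ℂ A).map e.toLinearMap := by
    rw [map_coordSubspace_basisFun_equiv, hA]
  obtain rfl : L₂ = (coordSubspace ℂ B).map e.toLinearMap := by
    rw [map_coordSubspace_basisFun_equiv, hB]
  rw [← map_inf _ e.injective, coordSubspace_inf, LinearEquiv.finrank_map_eq,
    finrank_coordSubspace] at hmeet
  rw [LinearEquiv.finrank_map_eq, finrank_coordSubspace] at hL₁ hL₂
  change (finrank ℂ ↥(homogeneousSubmodule _ ℂ d ⊓ vanishingSubmodule ℂ _ ⊓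
    vanishingSubmodule ℂ _) : ℤ) = _
  rw [finrank_homogeneousSubmodule_inf_vanishingSubmodule_map,
    homogeneousSubmodule_inf_vanishingSubmodule_coordSubspace, finrank_restrictSupport]
  have hcount := card_sdiff_finsuppAntidiag_union_add A B d
  rw [card_finsuppAntidiag_of_card_eq hL₁, card_finsuppAntidiag_of_card_eq hL₂,
    card_finsuppAntidiag_of_card_eq hmeet,
    card_finsuppAntidiag_of_card_eq (by simp : #(univ : Finset (Fin (m + 1))) = m + 1)] at hcount
  omega

/-- Claim 2.4 of the paper. The space of degree-`d` forms on `ℙ^m`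
vanishing on two fixed `k`-dimensional linear subspaces meeting along an
`h`-dimensional linear subspace has dimension `C(d+m,m) - 2·C(d+k,k) + C(d+h,h)`. -/
theorem stmt_13 (m k h d : ℕ) (hd : 1 ≤ d) (hhk : h + 1 ≤ k) (hkm : k ≤ m)
    (L₁ L₂ : Submodule ℂ (Fin (m + 1) → ℂ))
    (hL₁ : Module.finrank ℂ L₁ = k + 1) (hL₂ : Module.finrank ℂ L₂ = k + 1)
    (hmeet : Module.finrank ℂ ↥(L₁ ⊓ L₂) = h + 1) :
    (Module.finrank ℂ
        ↥(homogeneousSubmodule (Fin (m + 1)) ℂ d ⊓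
          (⨅ v ∈ L₁, LinearMap.ker (aeval (R := ℂ) v).toLinearMap) ⊓
          (⨅ v ∈ L₂, LinearMap.ker (aeval (R := ℂ) v).toLinearMap)) : ℤ) =
      ((d + m).choose m : ℤ) - 2 * ((d + k).choose k : ℤ) + ((d + h).choose h : ℤ) :=
  stmt_13_general m k h d L₁ L₂ hL₁ hL₂ hmeet
end

section
/- Let m, k, d be integers with d ≥ 1, k ≥ 0 and 2(k+1) ≤ m+1, and let L_1, L_2 ⊆ ℂ^{m+1} be ℂ-linear subspaces with dim L_1 = dim L_2 = k+1 and L_1 ∩ L_2 = {0}. Then the ℂ-vector subspace { g ∈ S_d : g vanishes identically on L_1 and on L_2 } of the space S_d of homogeneous polynomials of degree d in ℂ[x_0, …, x_m] has dimension binom(d + m, m) − 2·binom(d + k, k). -/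
/-!
Parametrize `Lᵢ` by injective linear maps `Bᵢ : K^{k+1} → K^{m+1}`. A form vanishes on `Lᵢ`
iff its pullback `g ∘ Bᵢ` is zero, so the space in question is the kernel of
`g ↦ (g ∘ B₁, g ∘ B₂) : S_d(K^{m+1}) → S_d(K^{k+1}) × S_d(K^{k+1})`. Since `L₁ ∩ L₂ = 0`,
`B₁ ⊕ B₂` has a left inverse `(π₁, π₂)`, and `p ∘ π₁ + q ∘ π₂` is a preimage of `(p, q)`
(as `d ≥ 1`, a form composed with `0` vanishes). Rank–nullity then gives the count.
-/

open MvPolynomial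

namespace MvPolynomial

variable {K : Type*} [Field K]

theorem finrank_homogeneousSubmodule (σ : Type*) [Fintype σ] [DecidableEq σ] (d : ℕ) :
    Module.finrank K (homogeneousSubmodule σ K d) = (Fintype.card σ + d - 1).choose d := by
  rw [homogeneousSubmodule_eq_finsupp_supported]
  refine (Module.finrank_eq_nat_card_basis (basisRestrictSupport K {y | y.degree = d})).trans ?_
  rw [show Nat.card {y : σ →₀ ℕ | y.degree = d} = Nat.card (Sym σ d) from
    Nat.card_congr (Sym.equivNatSum σ d).symm, Nat.card_eq_fintype_card, Sym.card_sym_eq_choose]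

instance (σ : Type*) [Finite σ] (d : ℕ) :
    Module.Finite K (homogeneousSubmodule σ K d) :=
  Module.Finite.iff_fg.mpr (homogeneousSubmodule_fg σ K d)

variable {σ τ : Type*} [Fintype σ] [DecidableEq σ]

noncomputable def pullback (T : (σ → K) →ₗ[K] (τ → K)) :
    MvPolynomial τ K →ₐ[K] MvPolynomial σ K :=
  aeval fun i => ∑ j, C (T (fun j' => if j = j' then 1 else 0) i) * X j

theorem aeval_pullback (T : (σ → K) →ₗ[K] (τ → K)) (v : σ → K) (g : MvPolynomial τ K) :
    aeval v (pullback T g) = aeval (T v) g := by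
  rw [pullback, ← AlgHom.comp_apply, comp_aeval, T.pi_apply_eq_sum_univ v]
  congr 2
  ext i
  simp [mul_comm]

theorem isHomogeneous_pullback (T : (σ → K) →ₗ[K] (τ → K)) {g : MvPolynomial τ K} {d : ℕ}
    (hg : g.IsHomogeneous d) : (pullback T g).IsHomogeneous d := by
  rw [← one_mul d]
  exact hg.aeval _ fun i => IsHomogeneous.sum _ _ 1 fun j _ => isHomogeneous_C_mul_X _ j

variable [Infinite K]

theorem pullback_pullback {ρ : Type*} [Fintype τ] [DecidableEq τ] (S : (σ → K) →ₗ[K] (τ → K))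
    (T : (τ → K) →ₗ[K] (ρ → K)) (g : MvPolynomial ρ K) :
    pullback S (pullback T g) = pullback (T ∘ₗ S) g :=
  funext fun v => by simp only [← aeval_eq_eval, aeval_pullback, LinearMap.comp_apply]

theorem pullback_id (g : MvPolynomial σ K) : pullback LinearMap.id g = g :=
  funext fun v => by simp only [← aeval_eq_eval, aeval_pullback, LinearMap.id_apply]

theorem pullback_zero {d : ℕ} (hd : d ≠ 0) {g : MvPolynomial τ K} (hg : g.IsHomogeneous d) :
    pullback (0 : (σ → K) →ₗ[K] (τ → K)) g = 0 :=
  funext fun v => by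
    simp only [← aeval_eq_eval, aeval_pullback, LinearMap.zero_apply, map_zero]
    rw [aeval_zero, constantCoeff_eq, hg.coeff_eq_zero (by simpa using hd.symm), map_zero]

theorem iInf_ker_aeval_range (T : (σ → K) →ₗ[K] (τ → K)) :
    ⨅ v ∈ LinearMap.range T, LinearMap.ker (aeval (R := K) v).toLinearMap =
      LinearMap.ker (pullback T).toLinearMap := by
  ext g
  simp only [Submodule.mem_iInf, LinearMap.mem_ker, AlgHom.toLinearMap_apply,
    LinearMap.mem_range, forall_exists_index, forall_apply_eq_imp_iff]
  refine ⟨fun h => funext fun v => ?_, fun h v => ?_⟩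
  · simp only [← aeval_eq_eval, aeval_pullback, h, map_zero]
  · rw [← aeval_pullback, h, map_zero]

theorem exists_isHomogeneous_pullback_eq_pullback_eq {ι₁ ι₂ : Type*} [Fintype ι₁]
    [DecidableEq ι₁] [Fintype ι₂] [DecidableEq ι₂]
    {B₁ : (ι₁ → K) →ₗ[K] (σ → K)} {B₂ : (ι₂ → K) →ₗ[K] (σ → K)}
    (hB₁ : Function.Injective B₁) (hB₂ : Function.Injective B₂)
    (hdisj : Disjoint (LinearMap.range B₁) (LinearMap.range B₂)) {d : ℕ} (hd : d ≠ 0)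
    {p : MvPolynomial ι₁ K} {q : MvPolynomial ι₂ K} (hp : p.IsHomogeneous d)
    (hq : q.IsHomogeneous d) :
    ∃ f : MvPolynomial σ K, f.IsHomogeneous d ∧ pullback B₁ f = p ∧ pullback B₂ f = q := by
  have hker : LinearMap.ker (B₁.coprod B₂) = ⊥ := by
    rw [LinearMap.ker_coprod_of_disjoint_range _ _ hdisj, LinearMap.ker_eq_bot.mpr hB₁,
      LinearMap.ker_eq_bot.mpr hB₂, Submodule.prod_bot]
  obtain ⟨π, hπ⟩ := (B₁.coprod B₂).exists_leftInverse_of_injective hker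
  have hπ₁ (u : ι₁ → K) : π (B₁ u) = (u, 0) := by
    simpa using LinearMap.congr_fun hπ (u, 0)
  have hπ₂ (u : ι₂ → K) : π (B₂ u) = (0, u) := by
    simpa using LinearMap.congr_fun hπ (0, u)
  refine ⟨pullback (LinearMap.fst K _ _ ∘ₗ π) p + pullback (LinearMap.snd K _ _ ∘ₗ π) q,
    (isHomogeneous_pullback _ hp).add (isHomogeneous_pullback _ hq), ?_, ?_⟩
  · have h₁ : (LinearMap.fst K _ _ ∘ₗ π) ∘ₗ B₁ = LinearMap.id := by ext; simp [hπ₁]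
    have h₂ : (LinearMap.snd K _ _ ∘ₗ π) ∘ₗ B₁ = 0 := by ext; simp [hπ₁]
    rw [map_add, pullback_pullback, pullback_pullback, h₁, h₂, pullback_id,
      pullback_zero hd hq, add_zero]
  · have h₁ : (LinearMap.fst K _ _ ∘ₗ π) ∘ₗ B₂ = 0 := by ext; simp [hπ₂]
    have h₂ : (LinearMap.snd K _ _ ∘ₗ π) ∘ₗ B₂ = LinearMap.id := by ext; simp [hπ₂]
    rw [map_add, pullback_pullback, pullback_pullback, h₁, h₂, pullback_id,
      pullback_zero hd hp, zero_add]

variable (K) in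
noncomputable def homogeneousPullback (T : (σ → K) →ₗ[K] (τ → K)) (d : ℕ) :
    homogeneousSubmodule τ K d →ₗ[K] homogeneousSubmodule σ K d :=
  (pullback T).toLinearMap.restrict fun _ hg => (mem_homogeneousSubmodule _ _).mpr <|
    isHomogeneous_pullback T ((mem_homogeneousSubmodule _ _).mp hg)

theorem finrank_homogeneous_inf_ker_pullback_add {ι₁ ι₂ : Type*} [Fintype ι₁]
    [DecidableEq ι₁] [Fintype ι₂] [DecidableEq ι₂]
    {B₁ : (ι₁ → K) →ₗ[K] (σ → K)} {B₂ : (ι₂ → K) →ₗ[K] (σ → K)}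
    (hB₁ : Function.Injective B₁) (hB₂ : Function.Injective B₂)
    (hdisj : Disjoint (LinearMap.range B₁) (LinearMap.range B₂)) {d : ℕ} (hd : d ≠ 0) :
    Module.finrank K ↥(homogeneousSubmodule σ K d ⊓ LinearMap.ker (pullback B₁).toLinearMap ⊓
        LinearMap.ker (pullback B₂).toLinearMap) +
      (Module.finrank K (homogeneousSubmodule ι₁ K d) +
        Module.finrank K (homogeneousSubmodule ι₂ K d)) =
      Module.finrank K (homogeneousSubmodule σ K d) := by
  set Ψ := (homogeneousPullback K B₁ d).prod (homogeneousPullback K B₂ d)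
  have hrange : LinearMap.range Ψ = ⊤ := by
    refine LinearMap.range_eq_top.mpr fun ⟨⟨p, hp⟩, ⟨q, hq⟩⟩ => ?_
    obtain ⟨f, hf, h₁, h₂⟩ :=
      exists_isHomogeneous_pullback_eq_pullback_eq hB₁ hB₂ hdisj hd hp hq
    exact ⟨⟨f, hf⟩, Prod.ext (Subtype.ext h₁) (Subtype.ext h₂)⟩
  have hker : LinearMap.ker Ψ = Submodule.comap (homogeneousSubmodule σ K d).subtype
      (homogeneousSubmodule σ K d ⊓ LinearMap.ker (pullback B₁).toLinearMap ⊓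
        LinearMap.ker (pullback B₂).toLinearMap) := by
    rw [LinearMap.ker_prod, homogeneousPullback, homogeneousPullback, LinearMap.ker_restrict,
      LinearMap.ker_restrict, Submodule.comap_inf, Submodule.comap_inf,
      Submodule.comap_subtype_self, top_inf_eq]
  have h := Ψ.finrank_range_add_finrank_ker
  rw [hrange, finrank_top, Module.finrank_prod, hker,
    (Submodule.comapSubtypeEquivOfLe (inf_le_left.trans inf_le_left)).finrank_eq] at h
  omega

end MvPolynomial

theorem Submodule.exists_injective_range_eq {K W : Type*} [Field K] [AddCommGroup W]
    [Module K W] (L : Submodule K W) [Module.Finite K L] :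
    ∃ B : (Fin (Module.finrank K L) → K) →ₗ[K] W, Function.Injective B ∧ LinearMap.range B = L :=
  ⟨L.subtype ∘ₗ (Module.finBasis K L).equivFun.symm.toLinearMap,
    L.injective_subtype.comp (Module.finBasis K L).equivFun.symm.injective, by
      rw [LinearMap.range_comp, LinearEquiv.range, Submodule.map_top, Submodule.range_subtype]⟩

theorem stmt_14_general (m k d : ℕ) (hd : 1 ≤ d)
    (L₁ L₂ : Submodule ℂ (Fin (m + 1) → ℂ))
    (hL₁ : Module.finrank ℂ L₁ = k + 1) (hL₂ : Module.finrank ℂ L₂ = k + 1)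
    (hskew : L₁ ⊓ L₂ = ⊥) :
    (Module.finrank ℂ
        ↥(homogeneousSubmodule (Fin (m + 1)) ℂ d ⊓
          (⨅ v ∈ L₁, LinearMap.ker (aeval (R := ℂ) v).toLinearMap) ⊓
          (⨅ v ∈ L₂, LinearMap.ker (aeval (R := ℂ) v).toLinearMap)) : ℤ) =
      ((d + m).choose m : ℤ) - 2 * ((d + k).choose k : ℤ) := by
  obtain ⟨B₁, hB₁, hr₁⟩ := L₁.exists_injective_range_eq
  obtain ⟨B₂, hB₂, hr₂⟩ := L₂.exists_injective_range_eq
  have h := finrank_homogeneous_inf_ker_pullback_add hB₁ hB₂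
    (by rwa [hr₁, hr₂, disjoint_iff]) (Nat.one_le_iff_ne_zero.mp hd)
  simp only [finrank_homogeneousSubmodule, Fintype.card_fin, hL₁, hL₂] at h
  rw [← hr₁, ← hr₂, iInf_ker_aeval_range, iInf_ker_aeval_range]
  have hchoose (n : ℕ) : (n + 1 + d - 1).choose d = (d + n).choose n := by
    rw [Nat.add_right_comm, Nat.add_sub_cancel, add_comm, Nat.choose_symm_add]
  rw [hchoose, hchoose] at h
  omega

/-- The space of degree-`d` forms on `ℙ^m` vanishing on two fixed
skew `k`-dimensional linear subspaces has dimension `C(d+m,m) - 2·C(d+k,k)`. -/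
theorem stmt_14 (m k d : ℕ) (hd : 1 ≤ d) (hdim : 2 * (k + 1) ≤ m + 1)
    (L₁ L₂ : Submodule ℂ (Fin (m + 1) → ℂ))
    (hL₁ : Module.finrank ℂ L₁ = k + 1) (hL₂ : Module.finrank ℂ L₂ = k + 1)
    (hskew : L₁ ⊓ L₂ = ⊥) :
    (Module.finrank ℂ
        ↥(homogeneousSubmodule (Fin (m + 1)) ℂ d ⊓
          (⨅ v ∈ L₁, LinearMap.ker (aeval (R := ℂ) v).toLinearMap) ⊓
          (⨅ v ∈ L₂, LinearMap.ker (aeval (R := ℂ) v).toLinearMap)) : ℤ) =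
      ((d + m).choose m : ℤ) - 2 * ((d + k).choose k : ℤ) :=
  stmt_14_general m k d hd L₁ L₂ hL₁ hL₂ hskew
end

section
/- Let m, k, s be integers with k ≥ 1, 1 ≤ s ≤ m−2 and k + s ≤ m, and let d_1, …, d_s be positive integers with d_1⋯d_s > 2. Assume t := ∑_{i=1}^s binom(d_i + k, k) − (k+1)(m−k) > 0. Then there exists at least one tuple of nonzero homogeneous polynomials g_1, …, g_s ∈ ℂ[x_0, …, x_m] with deg g_i = d_i admitting a (k+1)-dimensional ℂ-linear subspace L ⊆ ℂ^{m+1} on which all g_i vanish identically, and there also exists at least one such tuple admitting no such subspace (i.e., ∅ ≠ W_{d,k} ⊊ S*_{d}). -/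
/-!
After a unipotent change of coordinates adapted to a `(k+1)`-dimensional subspace `L` (a shear
fixing the pivot variables `P` of `L` and moving the coordinate subspace `ℂ^P` onto `L`), a tuple
vanishing on `L` has no monomial in the variables of `P` alone. Hence such tuples are covered by
finitely many polynomial, so `C¹`, images of spaces of real dimension
`2((m-k)(k+1) + Σ (dim S_{d_i} - binom(d_i+k, k)))`, which is less than `dim_ℝ S_d` exactly when
`t > 0`. The union of these images has Hausdorff dimension below `dim_ℝ S_d`, so its complement is
dense and meets the open set of tuples with all `g_i ≠ 0`. Conversely, the forms `x_m ^ d_i`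
vanish on every `(k+1)`-dimensional subspace of the hyperplane `x_m = 0`.
-/

open MvPolynomial Module Finset

section LinearAlgebra

variable {K ι : Type*} [Field K] [Fintype ι]

/- The coordinate functionals restricted to `L` span its dual; `P` indexes a basis among them, so
restriction to the coordinates in `P` is injective on `L`, hence bijective. -/
theorem Submodule.exists_finset_card_eq_finrank_eqOn (L : Submodule K (ι → K)) :
    ∃ P : Finset ι, #P = finrank K L ∧ ∀ w : ι → K, ∃ v ∈ L, Set.EqOn v w P := by
  classical
  let f : ι → Dual K L := fun j => (LinearMap.proj j).comp L.subtype
  have hf : Submodule.span K (Set.range f) = ⊤ := by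
    refine Submodule.span_eq_top_of_ne_zero fun v hv => ?_
    obtain ⟨j, hj⟩ := Function.ne_iff.mp (Subtype.coe_ne_coe.mpr hv)
    exact ⟨f j, Set.mem_range_self j, hj⟩
  obtain ⟨κ, a, ha, hspan, hli⟩ := exists_linearIndependent' K f
  let b : Basis κ K (Dual K L) := Basis.mk hli (by rw [hspan, hf])
  have := Module.Finite.finite_basis b
  have := Fintype.ofFinite κ
  let P : Finset ι := univ.map ⟨a, ha⟩
  let ρ : L →ₗ[K] (P → K) := LinearMap.pi fun p => f p
  have hρ : Function.Injective ρ := by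
    refine (injective_iff_map_eq_zero ρ).mpr fun v hv => ?_
    refine (Module.forall_dual_apply_eq_zero_iff K v).mp fun φ => ?_
    have hb : ∀ x, b x v = 0 := fun x =>
      by simpa [b, ρ, P] using congrFun hv ⟨a x, Finset.mem_map_of_mem _ (mem_univ x)⟩
    exact LinearMap.congr_fun (b.ext (f₁ := Dual.eval K L v) (f₂ := 0) hb) φ
  have hcard : #P = finrank K L := by
    rw [card_map, card_univ, ← finrank_eq_card_basis b, Subspace.dual_finrank_eq]
  refine ⟨P, hcard, fun w => ?_⟩
  have hsurj := (LinearMap.injective_iff_surjective_of_finrank_eq_finrank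
    (by rw [finrank_fintype_fun_eq_card, Fintype.card_coe, hcard])).mp hρ
  obtain ⟨v, hv⟩ := hsurj fun p => w p
  exact ⟨v, v.2, fun p hp => congrFun hv ⟨p, hp⟩⟩

theorem exists_finrank_eq_forall_apply_eq_zero (j : ι) {n : ℕ} (hn : n < Fintype.card ι) :
    ∃ L : Submodule K (ι → K), finrank K L = n ∧ ∀ v ∈ L, v j = 0 := by
  have hH := LinearMap.finrank_range_add_finrank_ker (LinearMap.proj j : (ι → K) →ₗ[K] K)
  rw [LinearMap.range_eq_top.mpr (LinearMap.proj_surjective j), finrank_top, finrank_self,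
    finrank_fintype_fun_eq_card] at hH
  set H := LinearMap.ker (LinearMap.proj j : (ι → K) →ₗ[K] K)
  obtain ⟨f, hf⟩ := exists_linearIndependent_of_le_finrank (R := K) (M := H) (n := n) (by omega)
  refine ⟨Submodule.span K (Set.range (H.subtype ∘ f)), ?_, fun v hv => ?_⟩
  · rw [finrank_span_eq_card (hf.map' H.subtype H.ker_subtype), Fintype.card_fin]
  · exact Submodule.span_le.mpr (by rintro _ ⟨i, rfl⟩; exact (f i).2) hv

end LinearAlgebra

theorem dense_compl_iUnion_range_of_finrank_lt {α : Type*} [Finite α] {E : α → Type*}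
    [∀ a, NormedAddCommGroup (E a)] [∀ a, NormedSpace ℝ (E a)] [∀ a, FiniteDimensional ℝ (E a)]
    {F : Type*} [NormedAddCommGroup F] [NormedSpace ℝ F] [FiniteDimensional ℝ F]
    {f : ∀ a, E a → F} (hf : ∀ a, ContDiff ℝ 1 (f a)) (hE : ∀ a, finrank ℝ (E a) < finrank ℝ F) :
    Dense (⋃ a, Set.range (f a))ᶜ := by
  cases isEmpty_or_nonempty α
  · simp
  · apply dense_compl_of_dimH_lt_finrank
    obtain ⟨a, ha⟩ := exists_eq_ciSup_of_finite (f := fun a => dimH (Set.range (f a)))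
    rw [dimH_iUnion, ← ha]
    exact (hf a).dimH_range_le.trans_lt (by exact_mod_cast hE a)

theorem Complex.finrank_real_fun (α : Type*) [Fintype α] :
    finrank ℝ (α → ℂ) = 2 * Fintype.card α := by
  rw [Module.finrank_pi_fintype ℝ]
  simp [Complex.finrank_real_complex, mul_comm]

namespace MvPolynomial

variable {K ι : Type*}

theorem eval_bind₁ {τ : Type*} [CommSemiring K] (w : τ → K) (f : ι → MvPolynomial τ K)
    (p : MvPolynomial ι K) : eval w (bind₁ f p) = eval (fun j => eval w (f j)) p :=
  eval₂Hom_bind₁ (RingHom.id K) w f p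

theorem coeff_bind₁_ite_X_zero [CommSemiring K] [DecidableEq ι] (P : Finset ι)
    (p : MvPolynomial ι K) (σ : ι →₀ ℕ) :
    coeff σ (bind₁ (fun j => if j ∈ P then X j else 0) p) =
      if σ.support ⊆ P then coeff σ p else 0 := by
  induction p using MvPolynomial.induction_on' with
  | monomial u a =>
    rw [bind₁_monomial]
    by_cases hu : u.support ⊆ P
    · rw [Finset.prod_congr rfl fun j hj => by rw [if_pos (hu hj)]]
      rw [show C a * ∏ j ∈ u.support, X j ^ u j = monomial u a by rw [monomial_eq]; rfl,
        coeff_monomial]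
      split_ifs with h1 h2 <;> simp_all
    · obtain ⟨j, hj, hjP⟩ := Finset.not_subset.mp hu
      rw [Finset.prod_eq_zero hj (by rw [if_neg hjP, zero_pow (Finsupp.mem_support_iff.mp hj)]),
        mul_zero, coeff_zero, coeff_monomial]
      split_ifs with h1 h2 <;> simp_all
  | add p q hp hq => simp only [map_add, coeff_add, hp, hq]; split_ifs <;> simp

theorem coeff_eq_zero_of_eval_eq_zero [Field K] [Infinite K] [DecidableEq ι] {P : Finset ι}
    {p : MvPolynomial ι K} (hp : ∀ w : ι → K, (∀ j ∉ P, w j = 0) → eval w p = 0)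
    {σ : ι →₀ ℕ} (hσ : σ.support ⊆ P) : coeff σ p = 0 := by
  have hzero : bind₁ (fun j => if j ∈ P then X j else 0) p = 0 := by
    refine MvPolynomial.funext fun w => ?_
    rw [map_zero, eval_bind₁]
    exact hp _ fun j hj => by simp [hj]
  simpa [coeff_bind₁_ite_X_zero, hσ] using congrArg (coeff σ) hzero

section OfCoeffs
variable [CommSemiring K] {S : Finset (ι →₀ ℕ)}

noncomputable def ofCoeffs (c : S → K) : MvPolynomial ι K :=
  ∑ σ : S, monomial σ (c σ)

theorem coeff_ofCoeffs (c : S → K) (σ : S) : coeff σ (ofCoeffs c) = c σ := by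
  classical
  rw [ofCoeffs, coeff_sum, Finset.sum_eq_single σ (fun τ _ hτ => by
    rw [coeff_monomial, if_neg (Subtype.coe_ne_coe.mpr hτ)]) (by simp), coeff_monomial, if_pos rfl]

theorem ofCoeffs_coeff {p : MvPolynomial ι K} (hp : p.support ⊆ S) :
    ofCoeffs (fun σ : S => coeff σ p) = p := by
  conv_rhs => rw [as_sum p]
  rw [ofCoeffs, Finset.sum_coe_sort S fun σ => monomial σ (coeff σ p)]
  exact (Finset.sum_subset hp fun σ _ hσ => by rw [notMem_support_iff.mp hσ, map_zero]).symm

theorem isHomogeneous_ofCoeffs [Fintype ι] [DecidableEq ι] {n : ℕ}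
    (c : (univ : Finset ι).finsuppAntidiag n → K) : (ofCoeffs c).IsHomogeneous n :=
  IsHomogeneous.sum _ _ _ fun σ _ => isHomogeneous_monomial _ <| by
    simpa [Finsupp.degree_eq_sum] using (mem_finsuppAntidiag.mp σ.2).1

theorem ofCoeffs_ne_zero {c : S → K} (hc : c ≠ 0) : ofCoeffs c ≠ 0 := by
  obtain ⟨σ, hσ⟩ := Function.ne_iff.mp hc
  exact ne_zero_iff.mpr ⟨σ, by rwa [coeff_ofCoeffs]⟩

theorem support_subset_of_isHomogeneous [Fintype ι] [DecidableEq ι] {p : MvPolynomial ι K} {n : ℕ}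
    (hp : p.IsHomogeneous n) : p.support ⊆ (univ : Finset ι).finsuppAntidiag n := fun σ hσ => by
  have hdeg := hp (mem_support_iff.mp hσ)
  simpa [mem_finsuppAntidiag, Finsupp.weight_eq_sum] using hdeg

end OfCoeffs

section Shear
variable [CommRing K] [DecidableEq ι] {P : Finset ι}

noncomputable def shear (P : Finset ι) (B : {j // j ∉ P} × P → K) (j : ι) : MvPolynomial ι K :=
  if h : j ∈ P then X j else X j + ∑ p : P, C (B (⟨j, h⟩, p)) * X (p : ι)

theorem shear_of_mem (B : {j // j ∉ P} × P → K) {j : ι} (hj : j ∈ P) : shear P B j = X j :=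
  dif_pos hj

theorem shear_of_notMem (B : {j // j ∉ P} × P → K) {j : ι} (hj : j ∉ P) :
    shear P B j = X j + ∑ p : P, C (B (⟨j, hj⟩, p)) * X (p : ι) :=
  dif_neg hj

theorem isHomogeneous_shear (B : {j // j ∉ P} × P → K) (j : ι) :
    (shear P B j).IsHomogeneous 1 := by
  unfold shear
  split_ifs
  · exact isHomogeneous_X K j
  · exact (isHomogeneous_X K j).add <| IsHomogeneous.sum _ _ _ fun p _ => by
      simpa using (isHomogeneous_X K (p : ι)).C_mul (B _)

theorem bind₁_shear_neg_bind₁_shear (B : {j // j ∉ P} × P → K) (p : MvPolynomial ι K) :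
    bind₁ (shear P (-B)) (bind₁ (shear P B) p) = p := by
  suffices h : ∀ j, bind₁ (shear P (-B)) (shear P B j) = X j by
    rw [bind₁_bind₁, _root_.funext h, bind₁_X_left, AlgHom.id_apply]
  intro j
  by_cases hj : j ∈ P
  · rw [shear_of_mem B hj, bind₁_X_right, shear_of_mem _ hj]
  · simp [shear_of_notMem _ hj, bind₁_X_right, shear_of_mem _ (Subtype.prop _)]

theorem eval_shear_mem {L : Submodule K (ι → K)} {u : P → ι → K} (hu : ∀ p, u p ∈ L)
    (hP : ∀ p : P, Set.EqOn (u p) (Pi.single (p : ι) 1) P) {w : ι → K} (hw : ∀ j ∉ P, w j = 0) :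
    (fun j => eval w (shear P (fun jp => u jp.2 jp.1) j)) ∈ L := by
  convert L.sum_mem (t := univ) fun (p : P) _ => L.smul_mem (w p) (hu p) using 1
  funext j
  rw [Finset.sum_apply]
  by_cases hj : j ∈ P
  · have hu' : ∀ p : P, u p j = if j = p then 1 else 0 := fun p => by
      rw [hP p hj, Pi.single_apply]
    rw [shear_of_mem _ hj, eval_X]
    simp [hu', Finset.sum_attach P fun p => if j = p then w p else 0, hj]
  · simp [shear_of_notMem _ hj, hw j hj, mul_comm]

end Shear

end MvPolynomial

section ContDiffCoeff

variable (E ι : Type*) [NormedAddCommGroup E] [NormedSpace ℝ E] (n : WithTop ℕ∞)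

def contDiffCoeffSubalgebra : Subalgebra ℂ (E → MvPolynomial ι ℂ) where
  carrier := {f | ∀ σ, ContDiff ℝ n fun x => coeff σ (f x)}
  mul_mem' {f g} hf hg σ := by
    classical
    simp only [Pi.mul_apply, coeff_mul]
    exact ContDiff.sum fun p _ => (hf p.1).mul (hg p.2)
  add_mem' hf hg σ := by simpa using (hf σ).add (hg σ)
  algebraMap_mem' c σ := by
    classical
    simp only [Pi.algebraMap_apply, algebraMap_eq, coeff_C]
    exact contDiff_const

variable {E ι n}

theorem const_mem_contDiffCoeffSubalgebra (p : MvPolynomial ι ℂ) :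
    (fun _ => p) ∈ contDiffCoeffSubalgebra E ι n :=
  fun _ => contDiff_const

theorem C_comp_mem_contDiffCoeffSubalgebra {a : E → ℂ} (ha : ContDiff ℝ n a) :
    (fun x => C (a x)) ∈ contDiffCoeffSubalgebra E ι n := fun σ => by
  classical
  simp only [coeff_C]
  split_ifs
  · exact ha
  · exact contDiff_const

end ContDiffCoeff

section Chart

variable (K ι : Type*) {κ : Type*} [Field K] [Fintype ι] [DecidableEq ι] (d : κ → ℕ)

abbrev Coeffs := ∀ i, (univ : Finset ι).finsuppAntidiag (d i) → K

abbrev ChartDomain (P : Finset ι) :=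
  ({j // j ∉ P} × P → K) ×
    ∀ i, ↥((univ : Finset ι).finsuppAntidiag (d i) \ P.finsuppAntidiag (d i)) → K

variable {K ι d}

/- A point `(B, c)` of `ChartDomain K ι d P` encodes the shear `shear P B` together with forms
`ofCoeffs (c i)` of degree `d i` having no monomial in the variables of `P` alone; `chart P`
returns the coefficients of the sheared forms. -/
noncomputable def chart (P : Finset ι) : ChartDomain K ι d P → Coeffs K ι d :=
  fun y i σ => coeff σ (bind₁ (shear P y.1) (ofCoeffs (y.2 i)))

theorem exists_coeff_mem_range_chart [Infinite K] {g : κ → MvPolynomial ι K}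
    (hg : ∀ i, (g i).IsHomogeneous (d i)) {L : Submodule K (ι → K)}
    (hL : ∀ i, ∀ v ∈ L, eval v (g i) = 0) :
    ∃ P : Finset ι, #P = finrank K L ∧
      (fun i (σ : (univ : Finset ι).finsuppAntidiag (d i)) => coeff σ (g i)) ∈
        Set.range (chart P) := by
  obtain ⟨P, hP, hsurj⟩ := L.exists_finset_card_eq_finrank_eqOn
  choose u hu hPu using fun p : P => hsurj (Pi.single p 1)
  set A := fun jp : {j // j ∉ P} × P => u jp.2 jp.1
  set h := fun i => bind₁ (shear P A) (g i)
  have hsupp : ∀ i, (h i).support ⊆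
      (univ : Finset ι).finsuppAntidiag (d i) \ P.finsuppAntidiag (d i) := by
    intro i σ hσ
    have hhom : (h i).IsHomogeneous (d i) := by
      simpa using (hg i).aeval (shear P A) (isHomogeneous_shear A)
    refine mem_sdiff.mpr ⟨support_subset_of_isHomogeneous hhom hσ, fun hσP => ?_⟩
    refine mem_support_iff.mp hσ (coeff_eq_zero_of_eval_eq_zero (fun w hw => ?_)
      (mem_finsuppAntidiag.mp hσP).2)
    rw [eval_bind₁]
    exact hL i _ (eval_shear_mem hu hPu hw)
  refine ⟨P, hP, (-A, fun i σ => coeff σ (h i)), ?_⟩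
  funext i σ
  simp only [chart, ofCoeffs_coeff (hsupp i), h, bind₁_shear_neg_bind₁_shear]

variable [Fintype κ]

theorem contDiff_chart (P : Finset ι) : ContDiff ℝ 1 (chart (K := ℂ) (d := d) P) := by
  refine contDiff_pi.mpr fun i => contDiff_pi.mpr fun σ => ?_
  have hB : ∀ jp, ContDiff ℝ 1 fun y : ChartDomain ℂ ι d P => y.1 jp :=
    contDiff_pi.mp contDiff_fst
  have hc : ∀ τ, ContDiff ℝ 1 fun y : ChartDomain ℂ ι d P => y.2 i τ :=
    contDiff_pi.mp (contDiff_pi.mp contDiff_snd i)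
  have hshear : ∀ j, (fun y : ChartDomain ℂ ι d P => shear P y.1 j) ∈
      contDiffCoeffSubalgebra (ChartDomain ℂ ι d P) ι 1 := by
    intro j
    by_cases hj : j ∈ P
    · simp only [shear_of_mem _ hj]
      exact const_mem_contDiffCoeffSubalgebra _
    · have hsum := sum_mem (t := univ) fun (p : P) _ =>
        mul_mem (C_comp_mem_contDiffCoeffSubalgebra (hB (⟨j, hj⟩, p)))
          (const_mem_contDiffCoeffSubalgebra (X (p : ι)))
      convert add_mem (const_mem_contDiffCoeffSubalgebra (X j)) hsum using 1
      funext y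
      simp [shear_of_notMem _ hj, Finset.sum_apply]
  have hchart : (fun y : ChartDomain ℂ ι d P => bind₁ (shear P y.1) (ofCoeffs (y.2 i))) ∈
      contDiffCoeffSubalgebra (ChartDomain ℂ ι d P) ι 1 := by
    have hsum := sum_mem (t := univ) fun τ _ =>
      mul_mem (C_comp_mem_contDiffCoeffSubalgebra (hc τ))
        (prod_mem (t := (τ : ι →₀ ℕ).support) fun j _ => pow_mem (hshear j) ((τ : ι →₀ ℕ) j))
    convert hsum using 1
    funext y
    simp [ofCoeffs, bind₁_monomial, Finset.sum_apply, Finset.prod_apply]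
  exact hchart σ

theorem finrank_chartDomain_lt_finrank_coeffs {P : Finset ι}
    (hP : #P * (Fintype.card ι - #P) < ∑ i, (#P + d i - 1).choose (d i)) :
    finrank ℝ (ChartDomain ℂ ι d P) < finrank ℝ (Coeffs ℂ ι d) := by
  have hsub : ∀ i, P.finsuppAntidiag (d i) ⊆ (univ : Finset ι).finsuppAntidiag (d i) :=
    fun i => finsuppAntidiag_mono (subset_univ P) _
  have hle : ∑ i, #(P.finsuppAntidiag (d i)) ≤ ∑ i, #((univ : Finset ι).finsuppAntidiag (d i)) :=
    sum_le_sum fun i _ => card_le_card (hsub i)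
  rw [Module.finrank_prod, Complex.finrank_real_fun, Module.finrank_pi_fintype ℝ,
    Module.finrank_pi_fintype ℝ]
  simp only [Complex.finrank_real_fun, Fintype.card_prod, Fintype.card_coe,
    card_sdiff_of_subset (hsub _), ← mul_sum, sum_tsub_distrib _ fun i _ => card_le_card (hsub i),
    Fintype.card_subtype_compl, Fintype.card_coe]
  simp only [card_finsuppAntidiag_nat_eq_choose (s := P)] at hle ⊢
  rw [mul_comm] at hP
  generalize (Fintype.card ι - #P) * #P = c at hP ⊢
  omega

theorem exists_isHomogeneous_ne_zero_forall_not_vanishing [Nonempty ι] {r : ℕ}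
    (hr : r * (Fintype.card ι - r) < ∑ i, (r + d i - 1).choose (d i)) :
    ∃ g : κ → MvPolynomial ι ℂ, (∀ i, (g i).IsHomogeneous (d i)) ∧ (∀ i, g i ≠ 0) ∧
      ∀ L : Submodule ℂ (ι → ℂ), finrank ℂ L = r → ¬ ∀ i, ∀ v ∈ L, eval v (g i) = 0 := by
  have hdense := dense_compl_iUnion_range_of_finrank_lt
    (f := fun P : {P : Finset ι // #P = r} => chart (d := d) P.1) (fun P => contDiff_chart P.1)
    (fun P => finrank_chartDomain_lt_finrank_coeffs (by rw [P.2]; exact hr))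
  have hopen : IsOpen {x : Coeffs ℂ ι d | ∀ i, x i ≠ 0} := by
    simp only [Set.ofPred_forall]
    exact isOpen_iInter_of_finite fun i => isOpen_ne_fun (continuous_apply i) continuous_const
  have hne : {x : Coeffs ℂ ι d | ∀ i, x i ≠ 0}.Nonempty :=
    ⟨fun _ _ => 1, fun i => Function.ne_iff.mpr
      ⟨⟨Finsupp.single (Classical.arbitrary ι) (d i), by simp [mem_finsuppAntidiag]⟩, one_ne_zero⟩⟩
  obtain ⟨x, hx0, hx⟩ := hdense.inter_open_nonempty _ hopen hne
  refine ⟨fun i => ofCoeffs (x i), fun i => isHomogeneous_ofCoeffs _,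
    fun i => ofCoeffs_ne_zero (hx0 i), fun L hL hvan => hx ?_⟩
  obtain ⟨P, hP, hmem⟩ := exists_coeff_mem_range_chart (fun i => isHomogeneous_ofCoeffs (x i)) hvan
  refine Set.mem_iUnion.mpr ⟨⟨P, hP.trans hL⟩, ?_⟩
  simpa [coeff_ofCoeffs] using hmem

end Chart

theorem stmt_17_general (m k s : ℕ) (hs1 : 1 ≤ s)
    (hks : k + s ≤ m) (d : Fin s → ℕ) (hd : ∀ i, 1 ≤ d i)
    (ht : 0 < (∑ i, ((d i + k).choose k : ℤ)) - ((k : ℤ) + 1) * ((m : ℤ) - (k : ℤ))) :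
    (∃ g : Fin s → MvPolynomial (Fin (m + 1)) ℂ,
      (∀ i, (g i).IsHomogeneous (d i)) ∧ (∀ i, g i ≠ 0) ∧
      ∃ L : Submodule ℂ (Fin (m + 1) → ℂ),
        Module.finrank ℂ L = k + 1 ∧ ∀ i, ∀ v ∈ L, eval v (g i) = 0) ∧
    (∃ g : Fin s → MvPolynomial (Fin (m + 1)) ℂ,
      (∀ i, (g i).IsHomogeneous (d i)) ∧ (∀ i, g i ≠ 0) ∧
      ¬ ∃ L : Submodule ℂ (Fin (m + 1) → ℂ),
        Module.finrank ℂ L = k + 1 ∧ ∀ i, ∀ v ∈ L, eval v (g i) = 0) := by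
  refine ⟨⟨fun i => X (Fin.last m) ^ d i, fun i => isHomogeneous_X_pow _ _,
    fun i => pow_ne_zero _ (X_ne_zero _), ?_⟩, ?_⟩
  · obtain ⟨L, hL, hLv⟩ :=
      exists_finrank_eq_forall_apply_eq_zero (K := ℂ) (Fin.last m) (n := k + 1) (by simp; omega)
    refine ⟨L, hL, fun i v hv => ?_⟩
    rw [map_pow, eval_X, hLv v hv, zero_pow (by have := hd i; omega)]
  · have hcount : (k + 1) * (Fintype.card (Fin (m + 1)) - (k + 1)) <
        ∑ i, (k + 1 + d i - 1).choose (d i) := by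
      have hchoose : ∀ i, (k + 1 + d i - 1).choose (d i) = (d i + k).choose k := fun i => by
        rw [show k + 1 + d i - 1 = d i + k by omega, Nat.choose_symm_add]
      simp only [hchoose, Fintype.card_fin]
      zify [show k + 1 ≤ m + 1 by omega]
      linarith
    obtain ⟨g, hg, hg0, hgL⟩ := exists_isHomogeneous_ne_zero_forall_not_vanishing hcount
    exact ⟨g, hg, hg0, fun ⟨L, hL, hvan⟩ => hgL L hL hvan⟩

/-- If `t > 0`, then `∅ ≠ W_{d,k} ⊊ S*_d`: there is a tuple of nonzero
forms of multidegree `(d₁, …, d_s)` whose common zero locus contains a `k`-dimensional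
linear subspace of `ℙ^m`, and also a tuple admitting no such subspace. -/
theorem stmt_17 (m k s : ℕ) (hk : 1 ≤ k) (hs1 : 1 ≤ s) (hs2 : s + 2 ≤ m)
    (hks : k + s ≤ m) (d : Fin s → ℕ) (hd : ∀ i, 1 ≤ d i) (hprod : 2 < ∏ i, d i)
    (ht : 0 < (∑ i, ((d i + k).choose k : ℤ)) - ((k : ℤ) + 1) * ((m : ℤ) - (k : ℤ))) :
    (∃ g : Fin s → MvPolynomial (Fin (m + 1)) ℂ,
      (∀ i, (g i).IsHomogeneous (d i)) ∧ (∀ i, g i ≠ 0) ∧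
      ∃ L : Submodule ℂ (Fin (m + 1) → ℂ),
        Module.finrank ℂ L = k + 1 ∧ ∀ i, ∀ v ∈ L, eval v (g i) = 0) ∧
    (∃ g : Fin s → MvPolynomial (Fin (m + 1)) ℂ,
      (∀ i, (g i).IsHomogeneous (d i)) ∧ (∀ i, g i ≠ 0) ∧
      ¬ ∃ L : Submodule ℂ (Fin (m + 1) → ℂ),
        Module.finrank ℂ L = k + 1 ∧ ∀ i, ∀ v ∈ L, eval v (g i) = 0) :=
  stmt_17_general m k s hs1 hks d hd ht
end
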